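/- arXiv:2409.16477 — 2 statements merged into one kernel-verified Lean document; each statement's English description precedes it below -/
import Mathlib

section
/- Let n and N be positive integers, let G be a real n×N matrix, let Y be a real N×N matrix, and let T = [[Iₙ, G],[0, Y]] be the block upper triangular (n+N)×(n+N) matrix with identity (1,1) block. Let q be a real polynomial and define p(z) = (1 − z)·q(z). Then p(0) = q(0), deg p ≤ deg q + 1, and ‖p(T)‖ ≤ (1 + ‖G‖ + ‖Y‖)·‖q(Y)‖, where ‖·‖ is the spectral norm and p(T), q(Y) denote polynomial evaluations at the matrices T and Y. -/
open Matrix Polynomial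
open scoped Matrix.Norms.L2Operator

/-- The spectral norm (ℓ²-operator norm) of a real matrix. -/
noncomputable def spectralNorm' {m n : Type*} [Fintype m] [Fintype n] [DecidableEq n]
    (M : Matrix m n ℝ) : ℝ :=
  ‖LinearMap.toContinuousLinearMap (Matrix.toEuclideanLin (𝕜 := ℝ) M)‖

lemma spectralNorm'_eq {m n : Type*} [Fintype m] [Fintype n] [DecidableEq n]
    (M : Matrix m n ℝ) : spectralNorm' M = ‖M‖ := rfl

lemma pow_fromBlocks_aux {n N : ℕ} (G : Matrix (Fin n) (Fin N) ℝ)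
    (Y : Matrix (Fin N) (Fin N) ℝ) (k : ℕ) :
    ∃ B, (Matrix.fromBlocks 1 G 0 Y : Matrix (Fin n ⊕ Fin N) (Fin n ⊕ Fin N) ℝ) ^ k = Matrix.fromBlocks 1 B 0 (Y ^ k) := by
  induction k with
  | zero => exact ⟨0, by simp [Matrix.fromBlocks_one]⟩
  | succ k ih =>
    obtain ⟨B, hB⟩ := ih
    refine ⟨G + B * Y, ?_⟩
    rw [pow_succ, hB, Matrix.fromBlocks_multiply]
    simp [pow_succ]

lemma aeval_fromBlocks_aux {n N : ℕ} (G : Matrix (Fin n) (Fin N) ℝ)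
    (Y : Matrix (Fin N) (Fin N) ℝ) (q : Polynomial ℝ) :
    ∃ A B, (Polynomial.aeval (Matrix.fromBlocks 1 G 0 Y : Matrix (Fin n ⊕ Fin N) (Fin n ⊕ Fin N) ℝ)) q
      = Matrix.fromBlocks A B 0 ((Polynomial.aeval Y) q) := by
  induction q using Polynomial.induction_on' with
  | add r s hr hs =>
    obtain ⟨A, B, h⟩ := hr
    obtain ⟨A', B', h'⟩ := hs
    exact ⟨A + A', B + B', by simp [h, h', Matrix.fromBlocks_add]⟩
  | monomial k a =>
    obtain ⟨B, hB⟩ := pow_fromBlocks_aux G Y k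
    refine ⟨a • 1, a • B, ?_⟩
    rw [aeval_monomial, aeval_monomial, hB, Algebra.algebraMap_eq_smul_one,
      Algebra.algebraMap_eq_smul_one, smul_mul_assoc, smul_mul_assoc, one_mul, one_mul,
      Matrix.fromBlocks_smul, smul_zero]

lemma euclid_norm_comp_inr_le {a b : Type*} [Fintype a] [Fintype b]
    (v : EuclideanSpace ℝ (a ⊕ b)) :
    ‖((WithLp.equiv 2 (b → ℝ)).symm fun j => v (Sum.inr j))‖ ≤ ‖v‖ := by
  rw [EuclideanSpace.norm_eq, EuclideanSpace.norm_eq]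
  apply Real.sqrt_le_sqrt
  rw [Fintype.sum_sum_type]
  simp only [WithLp.equiv_symm_apply, PiLp.toLp_apply]
  exact le_add_of_nonneg_left (Finset.sum_nonneg fun i _ => by positivity)

lemma euclid_norm_comp_inl_le {a b : Type*} [Fintype a] [Fintype b]
    (v : EuclideanSpace ℝ (a ⊕ b)) :
    ‖((WithLp.equiv 2 (a → ℝ)).symm fun j => v (Sum.inl j))‖ ≤ ‖v‖ := by
  rw [EuclideanSpace.norm_eq, EuclideanSpace.norm_eq]
  apply Real.sqrt_le_sqrt
  rw [Fintype.sum_sum_type]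
  simp only [WithLp.equiv_symm_apply, PiLp.toLp_apply]
  exact le_add_of_nonneg_right (Finset.sum_nonneg fun i _ => by positivity)

lemma l2_norm_fromBlocks_ur_le {n N : ℕ} (M : Matrix (Fin n) (Fin N) ℝ) :
    ‖(Matrix.fromBlocks 0 M 0 0 : Matrix (Fin n ⊕ Fin N) (Fin n ⊕ Fin N) ℝ)‖ ≤ ‖M‖ := by
  rw [Matrix.l2_opNorm_def]
  apply ContinuousLinearMap.opNorm_le_bound _ (norm_nonneg M)
  intro x
  have key : (LinearEquiv.trans Matrix.toEuclideanLin LinearMap.toContinuousLinearMap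
      (Matrix.fromBlocks 0 M 0 0 : Matrix (Fin n ⊕ Fin N) (Fin n ⊕ Fin N) ℝ)) x
      = (WithLp.equiv 2 _).symm (Sum.elim (M *ᵥ fun j => x (Sum.inr j)) 0) := by
    show Matrix.toEuclideanLin _ x = _
    rw [Matrix.toEuclideanLin_apply]
    congr 1
    ext (i | j)
    · simp [Matrix.mulVec, dotProduct, Fintype.sum_sum_type, Matrix.fromBlocks]
    · simp [Matrix.mulVec, dotProduct, Fintype.sum_sum_type, Matrix.fromBlocks]
  rw [key]
  have h1 : ‖((WithLp.equiv 2 ((Fin n ⊕ Fin N) → ℝ)).symm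
        (Sum.elim (M *ᵥ fun j => x (Sum.inr j)) 0) : EuclideanSpace ℝ (Fin n ⊕ Fin N))‖
      = ‖((WithLp.equiv 2 (Fin n → ℝ)).symm
        (M *ᵥ fun j => x (Sum.inr j)) : EuclideanSpace ℝ (Fin n))‖ := by
    rw [EuclideanSpace.norm_eq, EuclideanSpace.norm_eq]
    congr 1
    rw [Fintype.sum_sum_type]
    simp
  rw [h1]
  calc ‖((WithLp.equiv 2 (Fin n → ℝ)).symm
        (M *ᵥ fun j => x (Sum.inr j)) : EuclideanSpace ℝ (Fin n))‖
      ≤ ‖M‖ * ‖((WithLp.equiv 2 (Fin N → ℝ)).symm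
        (fun j => x (Sum.inr j)) : EuclideanSpace ℝ (Fin N))‖ :=
      Matrix.l2_opNorm_mulVec M ((WithLp.equiv 2 (Fin N → ℝ)).symm fun j => x (Sum.inr j))
    _ ≤ ‖M‖ * ‖x‖ := mul_le_mul_of_nonneg_left (euclid_norm_comp_inr_le x) (norm_nonneg M)

lemma l2_norm_fromBlocks_lr_le {n N : ℕ} (P : Matrix (Fin N) (Fin N) ℝ) :
    ‖(Matrix.fromBlocks 0 0 0 P : Matrix (Fin n ⊕ Fin N) (Fin n ⊕ Fin N) ℝ)‖ ≤ ‖P‖ := by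
  rw [Matrix.l2_opNorm_def]
  apply ContinuousLinearMap.opNorm_le_bound _ (norm_nonneg P)
  intro x
  have key : (LinearEquiv.trans Matrix.toEuclideanLin LinearMap.toContinuousLinearMap
      (Matrix.fromBlocks 0 0 0 P : Matrix (Fin n ⊕ Fin N) (Fin n ⊕ Fin N) ℝ)) x
      = (WithLp.equiv 2 _).symm (Sum.elim (0 : Fin n → ℝ) (P *ᵥ fun j => x (Sum.inr j))) := by
    show Matrix.toEuclideanLin _ x = _
    rw [Matrix.toEuclideanLin_apply]
    congr 1
    ext (i | j)
    · simp [Matrix.mulVec, dotProduct, Fintype.sum_sum_type, Matrix.fromBlocks]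
    · simp [Matrix.mulVec, dotProduct, Fintype.sum_sum_type, Matrix.fromBlocks]
  rw [key]
  have h1 : ‖((WithLp.equiv 2 ((Fin n ⊕ Fin N) → ℝ)).symm
        (Sum.elim (0 : Fin n → ℝ) (P *ᵥ fun j => x (Sum.inr j))) : EuclideanSpace ℝ (Fin n ⊕ Fin N))‖
      = ‖((WithLp.equiv 2 (Fin N → ℝ)).symm
        (P *ᵥ fun j => x (Sum.inr j)) : EuclideanSpace ℝ (Fin N))‖ := by
    rw [EuclideanSpace.norm_eq, EuclideanSpace.norm_eq]
    congr 1
    rw [Fintype.sum_sum_type]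
    simp
  rw [h1]
  calc ‖((WithLp.equiv 2 (Fin N → ℝ)).symm
        (P *ᵥ fun j => x (Sum.inr j)) : EuclideanSpace ℝ (Fin N))‖
      ≤ ‖P‖ * ‖((WithLp.equiv 2 (Fin N → ℝ)).symm
        (fun j => x (Sum.inr j)) : EuclideanSpace ℝ (Fin N))‖ :=
      Matrix.l2_opNorm_mulVec P ((WithLp.equiv 2 (Fin N → ℝ)).symm fun j => x (Sum.inr j))
    _ ≤ ‖P‖ * ‖x‖ := mul_le_mul_of_nonneg_left (euclid_norm_comp_inr_le x) (norm_nonneg P)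

/-- For the block upper triangular matrix `T = [[Iₙ, G],[0, Y]]`, a real
polynomial `q`, and `p(z) = (1 − z)·q(z)`, one has `p(0) = q(0)`, `deg p ≤ deg q + 1`, and
`‖p(T)‖ ≤ (1 + ‖G‖ + ‖Y‖)·‖q(Y)‖` in the spectral norm. -/
theorem block_upper_triangular_polynomial_bound {n N : ℕ}
    (G : Matrix (Fin n) (Fin N) ℝ) (Y : Matrix (Fin N) (Fin N) ℝ)
    (T : Matrix (Fin n ⊕ Fin N) (Fin n ⊕ Fin N) ℝ)
    (hT : T = Matrix.fromBlocks 1 G 0 Y)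
    (q p : Polynomial ℝ) (hp : p = (1 - Polynomial.X) * q) :
    p.eval 0 = q.eval 0 ∧ p.natDegree ≤ q.natDegree + 1 ∧
      spectralNorm' ((Polynomial.aeval T) p) ≤
        (1 + spectralNorm' G + spectralNorm' Y) * spectralNorm' ((Polynomial.aeval Y) q) := by
  refine ⟨by simp [hp], ?_, ?_⟩
  · calc p.natDegree ≤ (1 - Polynomial.X : Polynomial ℝ).natDegree + q.natDegree := by
          rw [hp]; exact Polynomial.natDegree_mul_le
      _ ≤ 1 + q.natDegree := by
          have : (1 - Polynomial.X : Polynomial ℝ).natDegree ≤ 1 := by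
            apply le_trans (Polynomial.natDegree_sub_le _ _); simp
          omega
      _ = q.natDegree + 1 := by omega
  · set qY := (Polynomial.aeval Y) q with hqY
    obtain ⟨A, B, hAB⟩ := aeval_fromBlocks_aux G Y q
    have hPT : (Polynomial.aeval T) p
        = Matrix.fromBlocks 0 (-(G * qY)) 0 ((1 - Y) * qY) := by
      rw [hp, _root_.map_mul, _root_.map_sub, _root_.map_one, aeval_X, hT, hAB,
        show (1 : Matrix (Fin n ⊕ Fin N) (Fin n ⊕ Fin N) ℝ) = Matrix.fromBlocks 1 0 0 1 from
          (Matrix.fromBlocks_one).symm]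
      rw [sub_eq_add_neg, Matrix.fromBlocks_neg, Matrix.fromBlocks_add, Matrix.fromBlocks_multiply]
      congr 1 <;> simp [Matrix.add_mul, Matrix.sub_mul, sub_eq_add_neg, Matrix.neg_mul, hqY]
    have hsplit : (Polynomial.aeval T) p
        = Matrix.fromBlocks 0 (-(G * qY)) 0 0 + Matrix.fromBlocks 0 0 0 ((1 - Y) * qY) := by
      rw [hPT, Matrix.fromBlocks_add]; simp
    have h1 : ‖(1 : Matrix (Fin N) (Fin N) ℝ)‖ ≤ 1 := by
      rw [Matrix.l2_opNorm_def]
      apply ContinuousLinearMap.opNorm_le_bound _ zero_le_one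
      intro x
      rw [one_mul]
      apply le_of_eq
      congr 1
      ext i
      simp [Matrix.toEuclideanLin_apply]
    rw [spectralNorm'_eq, spectralNorm'_eq, spectralNorm'_eq, spectralNorm'_eq, hsplit]
    calc ‖Matrix.fromBlocks 0 (-(G * qY)) 0 0 + Matrix.fromBlocks 0 0 0 ((1 - Y) * qY)‖
        ≤ ‖(Matrix.fromBlocks 0 (-(G * qY)) 0 0 : Matrix (Fin n ⊕ Fin N) _ ℝ)‖
          + ‖(Matrix.fromBlocks 0 0 0 ((1 - Y) * qY) : Matrix (Fin n ⊕ Fin N) _ ℝ)‖ :=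
        norm_add_le _ _
      _ ≤ ‖-(G * qY)‖ + ‖(1 - Y) * qY‖ :=
        add_le_add (l2_norm_fromBlocks_ur_le _) (l2_norm_fromBlocks_lr_le _)
      _ ≤ ‖G‖ * ‖qY‖ + (1 + ‖Y‖) * ‖qY‖ := by
        rw [norm_neg]
        refine add_le_add (Matrix.l2_opNorm_mul _ _) ?_
        refine le_trans (Matrix.l2_opNorm_mul _ _) ?_
        apply mul_le_mul_of_nonneg_right _ (norm_nonneg _)
        exact le_trans (norm_sub_le _ _) (add_le_add h1 le_rfl)
      _ = (1 + ‖G‖ + ‖Y‖) * ‖qY‖ := by ring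
end

section
/- Let n and N be positive integers, let A be a symmetric positive definite real n×n matrix, let M be a symmetric positive definite real N×N matrix, let B be a real N×n matrix, and let d ≥ 0 be a real number with Bᵀ M⁻¹ B ⪯ d·A. Then ‖A⁻¹Bᵀ‖² ≤ d·λ_max(M)/λ_min(A), where ‖·‖ is the spectral norm, λ_max(M) is the largest eigenvalue of M, and λ_min(A) is the smallest eigenvalue of A. -/
open Matrix

section Aux

variable {k : ℕ} [NeZero k]

lemma aux_sub_smul_psd {A : Matrix (Fin k) (Fin k) ℝ} (hA : A.IsHermitian) :
    (A - (⨅ i, hA.eigenvalues i) • (1 : Matrix (Fin k) (Fin k) ℝ)).PosSemidef := by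
  set c := ⨅ i, hA.eigenvalues i with hc
  have hle : ∀ i, c ≤ hA.eigenvalues i := fun i => ciInf_le (Finite.bddBelow_range _) i
  have hD : (Matrix.diagonal (fun i => hA.eigenvalues i - c)).PosSemidef :=
    Matrix.PosSemidef.diagonal (fun i => sub_nonneg.2 (hle i))
  have h2 := hD.mul_mul_conjTranspose_same (hA.eigenvectorUnitary : Matrix (Fin k) (Fin k) ℝ)
  have hU : (hA.eigenvectorUnitary : Matrix (Fin k) (Fin k) ℝ) *
      (hA.eigenvectorUnitary : Matrix (Fin k) (Fin k) ℝ)ᴴ = 1 := by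
    have h := (Unitary.mem_iff.mp hA.eigenvectorUnitary.2).2
    simpa [Matrix.star_eq_conjTranspose] using h
  have hspec := hA.spectral_theorem
  have hdiag : Matrix.diagonal (fun i => hA.eigenvalues i - c)
      = Matrix.diagonal hA.eigenvalues - c • (1 : Matrix (Fin k) (Fin k) ℝ) := by
    ext i j
    rcases eq_or_ne i j with h | h
    · subst h; simp
    · simp [Matrix.diagonal_apply_ne _ h, Matrix.one_apply_ne h]
  have : (hA.eigenvectorUnitary : Matrix (Fin k) (Fin k) ℝ) *
      Matrix.diagonal (fun i => hA.eigenvalues i - c) *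
      (hA.eigenvectorUnitary : Matrix (Fin k) (Fin k) ℝ)ᴴ
      = A - c • 1 := by
    rw [hdiag, Matrix.mul_sub, Matrix.sub_mul, Matrix.mul_smul, Matrix.mul_one,
      Matrix.smul_mul]
    have h1 : (hA.eigenvectorUnitary : Matrix (Fin k) (Fin k) ℝ) *
        Matrix.diagonal hA.eigenvalues *
        (hA.eigenvectorUnitary : Matrix (Fin k) (Fin k) ℝ)ᴴ = A := by
      conv_rhs => rw [hspec]
      simp [RCLike.ofReal_real_eq_id, Function.comp, Matrix.star_eq_conjTranspose]
    rw [h1]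
    congr 1
    rw [hU]
  rwa [this] at h2

lemma aux_smul_sub_psd {A : Matrix (Fin k) (Fin k) ℝ} (hA : A.IsHermitian) :
    ((⨆ i, hA.eigenvalues i) • (1 : Matrix (Fin k) (Fin k) ℝ) - A).PosSemidef := by
  set c := ⨆ i, hA.eigenvalues i with hc
  have hle : ∀ i, hA.eigenvalues i ≤ c := fun i => le_ciSup (Finite.bddAbove_range _) i
  have hD : (Matrix.diagonal (fun i => c - hA.eigenvalues i)).PosSemidef :=
    Matrix.PosSemidef.diagonal (fun i => sub_nonneg.2 (hle i))
  have h2 := hD.mul_mul_conjTranspose_same (hA.eigenvectorUnitary : Matrix (Fin k) (Fin k) ℝ)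
  have hU : (hA.eigenvectorUnitary : Matrix (Fin k) (Fin k) ℝ) *
      (hA.eigenvectorUnitary : Matrix (Fin k) (Fin k) ℝ)ᴴ = 1 := by
    have h := (Unitary.mem_iff.mp hA.eigenvectorUnitary.2).2
    simpa [Matrix.star_eq_conjTranspose] using h
  have hspec := hA.spectral_theorem
  have hdiag : Matrix.diagonal (fun i => c - hA.eigenvalues i)
      = c • (1 : Matrix (Fin k) (Fin k) ℝ) - Matrix.diagonal hA.eigenvalues := by
    ext i j
    rcases eq_or_ne i j with h | h
    · subst h; simp
    · simp [Matrix.diagonal_apply_ne _ h, Matrix.one_apply_ne h]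
  have : (hA.eigenvectorUnitary : Matrix (Fin k) (Fin k) ℝ) *
      Matrix.diagonal (fun i => c - hA.eigenvalues i) *
      (hA.eigenvectorUnitary : Matrix (Fin k) (Fin k) ℝ)ᴴ
      = c • 1 - A := by
    rw [hdiag, Matrix.mul_sub, Matrix.sub_mul, Matrix.mul_smul, Matrix.mul_one,
      Matrix.smul_mul]
    have h1 : (hA.eigenvectorUnitary : Matrix (Fin k) (Fin k) ℝ) *
        Matrix.diagonal hA.eigenvalues *
        (hA.eigenvectorUnitary : Matrix (Fin k) (Fin k) ℝ)ᴴ = A := by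
      conv_rhs => rw [hspec]
      simp [RCLike.ofReal_real_eq_id, Function.comp, Matrix.star_eq_conjTranspose]
    rw [h1]
    congr 1
    rw [hU]
  rwa [this] at h2

lemma aux_quad_lower {A : Matrix (Fin k) (Fin k) ℝ} (hA : A.IsHermitian)
    (y : Fin k → ℝ) : (⨅ i, hA.eigenvalues i) * (y ⬝ᵥ y) ≤ y ⬝ᵥ A *ᵥ y := by
  have h := (aux_sub_smul_psd hA).dotProduct_mulVec_nonneg y
  simp only [star_trivial, sub_mulVec, dotProduct_sub, smul_mulVec, one_mulVec,
    dotProduct_smul, smul_eq_mul] at h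
  linarith

lemma aux_quad_upper {A : Matrix (Fin k) (Fin k) ℝ} (hA : A.IsHermitian)
    (y : Fin k → ℝ) : y ⬝ᵥ A *ᵥ y ≤ (⨆ i, hA.eigenvalues i) * (y ⬝ᵥ y) := by
  have h := (aux_smul_sub_psd hA).dotProduct_mulVec_nonneg y
  simp only [star_trivial, sub_mulVec, dotProduct_sub, smul_mulVec, one_mulVec,
    dotProduct_smul, smul_eq_mul] at h
  linarith

lemma aux_cauchy_schwarz {P : Matrix (Fin k) (Fin k) ℝ} (hP : P.PosSemidef)
    (x z : Fin k → ℝ) : (x ⬝ᵥ P *ᵥ z) ^ 2 ≤ (x ⬝ᵥ P *ᵥ x) * (z ⬝ᵥ P *ᵥ z) := by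
  have hPt : Pᵀ = P := by
    have h := hP.1
    rwa [Matrix.IsHermitian, conjTranspose_eq_transpose_of_trivial] at h
  have hsym : ∀ u v : Fin k → ℝ, u ⬝ᵥ P *ᵥ v = v ⬝ᵥ P *ᵥ u := by
    intro u v
    rw [dotProduct_mulVec, ← Matrix.mulVec_transpose, hPt, dotProduct_comm]
  have key : ∀ t : ℝ, 0 ≤ (z ⬝ᵥ P *ᵥ z) * (t * t) + (2 * (x ⬝ᵥ P *ᵥ z)) * t
      + (x ⬝ᵥ P *ᵥ x) := by
    intro t
    have h := hP.dotProduct_mulVec_nonneg (x + t • z)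
    simp only [star_trivial, mulVec_add, mulVec_smul, dotProduct_add, add_dotProduct,
      dotProduct_smul, smul_dotProduct, smul_eq_mul] at h
    have hzx : z ⬝ᵥ P *ᵥ x = x ⬝ᵥ P *ᵥ z := hsym z x
    rw [hzx] at h
    ring_nf at h ⊢
    linarith
  have hd := discrim_le_zero key
  rw [discrim] at hd
  nlinarith [hd]

end Aux

/-- For symmetric positive definite `A` (n×n) and `M` (N×N), `B` an N×n
matrix, and `d ≥ 0` with `Bᵀ M⁻¹ B ⪯ d·A`, one has
`‖A⁻¹Bᵀ‖² ≤ d·λ_max(M)/λ_min(A)` in the spectral norm, where `λ_max(M)` is the largest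
eigenvalue of `M` and `λ_min(A)` is the smallest eigenvalue of `A`. -/
theorem off_diagonal_block_bound {n N : ℕ} [NeZero n] [NeZero N]
    (A : Matrix (Fin n) (Fin n) ℝ) (hA : A.PosDef)
    (M : Matrix (Fin N) (Fin N) ℝ) (hM : M.PosDef)
    (B : Matrix (Fin N) (Fin n) ℝ) (d : ℝ) (hd : 0 ≤ d)
    (hBM : (d • A - Bᵀ * M⁻¹ * B).PosSemidef) :
    spectralNorm' (A⁻¹ * Bᵀ) ^ 2 ≤
      d * (⨆ i, hM.1.eigenvalues i) / (⨅ i, hA.1.eigenvalues i) := by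
  set c₁ := ⨅ i, hA.1.eigenvalues i with hc₁
  set c₂ := ⨆ i, hM.1.eigenvalues i with hc₂
  have hc₁pos : 0 < c₁ := by
    obtain ⟨i, hi⟩ := Finite.exists_min hA.1.eigenvalues
    exact lt_of_lt_of_le (hA.eigenvalues_pos i) (le_ciInf hi)
  have hc₂pos : 0 < c₂ := by
    obtain ⟨i⟩ := (inferInstance : Nonempty (Fin N))
    exact lt_of_lt_of_le (hM.eigenvalues_pos i) (le_ciSup (Finite.bddAbove_range _) i)
  set K := d * c₂ / c₁ with hK
  have hKnonneg : 0 ≤ K := by positivity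
  -- invertibility facts
  have hAdet : IsUnit A.det := isUnit_iff_ne_zero.2 hA.det_pos.ne'
  have hMdet : IsUnit M.det := isUnit_iff_ne_zero.2 hM.det_pos.ne'
  have hAinv : A * A⁻¹ = 1 := Matrix.mul_nonsing_inv A hAdet
  have hMinv : M * M⁻¹ = 1 := Matrix.mul_nonsing_inv M hMdet
  -- the key pointwise bound
  have key : ∀ x : Fin N → ℝ,
      c₁ * (((A⁻¹ * Bᵀ) *ᵥ x) ⬝ᵥ ((A⁻¹ * Bᵀ) *ᵥ x)) ≤ d * c₂ * (x ⬝ᵥ x) := by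
    intro x
    set y := (A⁻¹ * Bᵀ) *ᵥ x with hy
    set z := B *ᵥ y with hz
    have hAy : A *ᵥ y = Bᵀ *ᵥ x := by
      rw [hy, Matrix.mulVec_mulVec, ← Matrix.mul_assoc, hAinv, Matrix.one_mul]
    set q := y ⬝ᵥ A *ᵥ y with hq
    have hq0 : 0 ≤ q := by
      have := hA.posSemidef.dotProduct_mulVec_nonneg y
      simpa using this
    have hqxz : q = x ⬝ᵥ z := by
      rw [hq, hAy, dotProduct_mulVec, Matrix.vecMul_transpose, dotProduct_comm]
    -- symmetry helper for M
    have hMt : Mᵀ = M := by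
      have h := hM.1
      rwa [Matrix.IsHermitian, conjTranspose_eq_transpose_of_trivial] at h
    have hMsymm : ∀ u v : Fin N → ℝ, (M *ᵥ u) ⬝ᵥ v = u ⬝ᵥ M *ᵥ v := by
      intro u v
      conv_lhs => rw [← hMt, Matrix.mulVec_transpose]
      rw [← dotProduct_mulVec]
    -- z ⬝ᵥ M⁻¹ z ≤ d * q
    have hzq : z ⬝ᵥ M⁻¹ *ᵥ z ≤ d * q := by
      have h := hBM.dotProduct_mulVec_nonneg y
      simp only [star_trivial, sub_mulVec, dotProduct_sub, smul_mulVec,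
        dotProduct_smul, smul_eq_mul] at h
      have hrw : y ⬝ᵥ (Bᵀ * M⁻¹ * B) *ᵥ y = z ⬝ᵥ M⁻¹ *ᵥ z := by
        rw [Matrix.mul_assoc, ← Matrix.mulVec_mulVec, dotProduct_mulVec,
          Matrix.vecMul_transpose, ← Matrix.mulVec_mulVec]
      rw [hrw] at h
      linarith
    -- Cauchy–Schwarz with M⁻¹
    have hcs := aux_cauchy_schwarz (hM.inv.posSemidef) (M *ᵥ x) z
    have h1 : (M *ᵥ x) ⬝ᵥ M⁻¹ *ᵥ z = x ⬝ᵥ z := by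
      rw [hMsymm, Matrix.mulVec_mulVec, hMinv, Matrix.one_mulVec]
    have h2 : (M *ᵥ x) ⬝ᵥ M⁻¹ *ᵥ (M *ᵥ x) = x ⬝ᵥ M *ᵥ x := by
      rw [hMsymm, Matrix.mulVec_mulVec, Matrix.mulVec_mulVec, hMinv,
        Matrix.one_mul]
    rw [h1, h2] at hcs
    -- q² ≤ (x ⬝ᵥ M x) * (d q)
    have hxMx : 0 ≤ x ⬝ᵥ M *ᵥ x := by
      have := hM.posSemidef.dotProduct_mulVec_nonneg x
      simpa using this
    have hq2 : q ^ 2 ≤ (x ⬝ᵥ M *ᵥ x) * (d * q) := by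
      calc q ^ 2 = (x ⬝ᵥ z) ^ 2 := by rw [hqxz]
        _ ≤ (x ⬝ᵥ M *ᵥ x) * (z ⬝ᵥ M⁻¹ *ᵥ z) := hcs
        _ ≤ (x ⬝ᵥ M *ᵥ x) * (d * q) := by
            exact mul_le_mul_of_nonneg_left hzq hxMx
    have hqle : q ≤ d * (x ⬝ᵥ M *ᵥ x) := by
      rcases eq_or_lt_of_le hq0 with h | h
      · rw [← h]; positivity
      · nlinarith [hq2]
    have hMup : x ⬝ᵥ M *ᵥ x ≤ c₂ * (x ⬝ᵥ x) := aux_quad_upper hM.1 x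
    have hAlow : c₁ * (y ⬝ᵥ y) ≤ q := aux_quad_lower hA.1 y
    calc c₁ * (y ⬝ᵥ y) ≤ q := hAlow
      _ ≤ d * (x ⬝ᵥ M *ᵥ x) := hqle
      _ ≤ d * (c₂ * (x ⬝ᵥ x)) := mul_le_mul_of_nonneg_left hMup hd
      _ = d * c₂ * (x ⬝ᵥ x) := by ring
  -- from pointwise bound to operator norm bound
  set T := LinearMap.toContinuousLinearMap (Matrix.toEuclideanLin (𝕜 := ℝ) (A⁻¹ * Bᵀ)) with hT
  have hbound : ‖T‖ ≤ Real.sqrt K := by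
    apply ContinuousLinearMap.opNorm_le_bound _ (Real.sqrt_nonneg K)
    intro x
    have hTx : ∀ i, (T x) i = ((A⁻¹ * Bᵀ) *ᵥ (fun j => x j)) i := fun i => rfl
    have hnormTx : ‖T x‖ ^ 2 = ((A⁻¹ * Bᵀ) *ᵥ (fun j => x j)) ⬝ᵥ ((A⁻¹ * Bᵀ) *ᵥ (fun j => x j)) := by
      rw [← real_inner_self_eq_norm_sq]
      rw [PiLp.inner_apply]
      simp only [RCLike.inner_apply, conj_trivial]
      rw [dotProduct]
      exact Finset.sum_congr rfl fun i _ => by rw [hTx i]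
    have hnormx : ‖x‖ ^ 2 = (fun j => x j) ⬝ᵥ (fun j => x j) := by
      rw [← real_inner_self_eq_norm_sq, PiLp.inner_apply]
      simp only [RCLike.inner_apply, conj_trivial]
      rfl
    have hkey := key (fun j => x j)
    have hsq : ‖T x‖ ^ 2 ≤ K * ‖x‖ ^ 2 := by
      rw [hnormTx, hnormx, hK]
      rw [div_mul_eq_mul_div, le_div_iff₀ hc₁pos]
      calc ((A⁻¹ * Bᵀ) *ᵥ (fun j => x j)) ⬝ᵥ ((A⁻¹ * Bᵀ) *ᵥ (fun j => x j)) * c₁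
          = c₁ * (((A⁻¹ * Bᵀ) *ᵥ (fun j => x j)) ⬝ᵥ ((A⁻¹ * Bᵀ) *ᵥ (fun j => x j))) := by ring
        _ ≤ d * c₂ * ((fun j => x j) ⬝ᵥ (fun j => x j)) := hkey
    calc ‖T x‖ = Real.sqrt (‖T x‖ ^ 2) := by rw [Real.sqrt_sq (norm_nonneg _)]
      _ ≤ Real.sqrt (K * ‖x‖ ^ 2) := Real.sqrt_le_sqrt hsq
      _ = Real.sqrt K * ‖x‖ := by
          rw [Real.sqrt_mul hKnonneg, Real.sqrt_sq (norm_nonneg _)]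
  have : spectralNorm' (A⁻¹ * Bᵀ) = ‖T‖ := rfl
  rw [this]
  calc ‖T‖ ^ 2 ≤ Real.sqrt K ^ 2 := by
        apply pow_le_pow_left₀ (norm_nonneg _) hbound
    _ = K := Real.sq_sqrt hKnonneg
end
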